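/- Let m be a natural number, s_0,…,s_m, n_0,…,n_m, d_0,…,d_m ∈ ℂ, and let μ, ν be natural numbers with μ ≤ m and ν ≤ m. Suppose ∑_{k=0}^m n_k s_k^l = 0 for all l < μ with ∑_{k=0}^m n_k s_k^μ ≠ 0, and ∑_{k=0}^m d_k s_k^l = 0 for all l < ν with ∑_{k=0}^m d_k s_k^ν ≠ 0. Then, letting r(s) = (∑_{k=0}^m n_k/(s − s_k)) / (∑_{k=0}^m d_k/(s − s_k)), the function s ↦ r(s)·s^{(μ:ℤ)−ν} tends to (∑_{k=0}^m n_k s_k^μ)/(∑_{k=0}^m d_k s_k^ν) as s → ∞ in ℂ (along the cobounded filter); in particular the relative degree of r is ν − μ. -/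

import Mathlib

/-!
Since `z^(p+1)/(z - a) = ∑_{i ≤ p} z^i a^(p-i) + a^(p+1)/(z - a)`, multiplying
`∑ c_k/(z - s_k)` by `z^(p+1)` produces the moments `∑ c_k s_k^l`, `l ≤ p`, weighted by powers
of `z`, plus a term that vanishes at infinity. When the moments below `p` vanish only
`∑ c_k s_k^p` survives, so numerator and denominator of `r`, multiplied by `z^(μ+1)` and
`z^(ν+1)`, tend to `∑ n_k s_k^μ` and `∑ d_k s_k^ν`, and the limit of the quotient follows.
-/

open Filter Finset Bornology Topology

lemma pow_succ_div_sub_eq {K : Type*} [Field K] (p : ℕ) {z a : K} (h : z ≠ a) :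
    z ^ (p + 1) / (z - a) =
      ∑ i ∈ range (p + 1), z ^ i * a ^ (p - i) + a ^ (p + 1) / (z - a) := by
  have hza : z - a ≠ 0 := sub_ne_zero.2 h
  rw [← sub_eq_iff_eq_add, ← sub_div, div_eq_iff hza, eq_comm]
  simpa using geom_sum₂_mul z a (p + 1)

lemma sum_mul_geom_sum₂_eq_of_moments_eq_zero {R ι : Type*} [CommRing R] (t : Finset ι)
    (c s : ι → R) (p : ℕ) (z : R) (h0 : ∀ l < p, ∑ k ∈ t, c k * s k ^ l = 0) :
    ∑ k ∈ t, c k * ∑ i ∈ range (p + 1), z ^ i * s k ^ (p - i) = ∑ k ∈ t, c k * s k ^ p := by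
  calc ∑ k ∈ t, c k * ∑ i ∈ range (p + 1), z ^ i * s k ^ (p - i)
      = ∑ i ∈ range (p + 1), z ^ i * ∑ k ∈ t, c k * s k ^ (p - i) := by
        simp_rw [mul_sum]
        rw [sum_comm]
        exact sum_congr rfl fun _ _ => sum_congr rfl fun _ _ => by ring
    _ = z ^ 0 * ∑ k ∈ t, c k * s k ^ (p - 0) := by
        refine sum_eq_single_of_mem 0 (mem_range.2 p.succ_pos) fun i hi hi0 => ?_
        rw [h0 (p - i) (by have := mem_range.1 hi; omega), mul_zero]
    _ = ∑ k ∈ t, c k * s k ^ p := by simp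

section NormedField

variable {𝕜 ι : Type*} [NormedField 𝕜]

lemma tendsto_sum_div_sub_cobounded (t : Finset ι) (c s : ι → 𝕜) :
    Tendsto (fun z => ∑ k ∈ t, c k / (z - s k)) (cobounded 𝕜) (𝓝 0) := by
  rw [← sum_const_zero (s := t)]
  refine tendsto_finsetSum _ fun k _ => ?_
  simpa [div_eq_mul_inv] using
    (tendsto_inv₀_cobounded.comp (tendsto_sub_const_cobounded (s k))).const_mul (c k)

lemma tendsto_pow_succ_mul_sum_div_sub (t : Finset ι) (c s : ι → 𝕜) (p : ℕ)
    (h0 : ∀ l < p, ∑ k ∈ t, c k * s k ^ l = 0) :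
    Tendsto (fun z => z ^ (p + 1) * ∑ k ∈ t, c k / (z - s k)) (cobounded 𝕜)
      (𝓝 (∑ k ∈ t, c k * s k ^ p)) := by
  have hlim := (tendsto_sum_div_sub_cobounded t (fun k => c k * s k ^ (p + 1)) s).const_add
    (∑ k ∈ t, c k * s k ^ p)
  rw [add_zero] at hlim
  refine hlim.congr' ?_
  filter_upwards [(eventually_all_finset t).2 fun k _ => eventually_ne_cobounded (s k)]
    with z hz
  calc ∑ k ∈ t, c k * s k ^ p + ∑ k ∈ t, c k * s k ^ (p + 1) / (z - s k)
      = ∑ k ∈ t, c k * (∑ i ∈ range (p + 1), z ^ i * s k ^ (p - i)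
          + s k ^ (p + 1) / (z - s k)) := by
        rw [← sum_mul_geom_sum₂_eq_of_moments_eq_zero t c s p z h0, ← sum_add_distrib]
        exact sum_congr rfl fun _ _ => by ring
    _ = z ^ (p + 1) * ∑ k ∈ t, c k / (z - s k) := by
        rw [mul_sum]
        refine sum_congr rfl fun k hk => ?_
        rw [← pow_succ_div_sub_eq p (hz k hk)]
        ring

end NormedField

theorem barycentric_relative_degree_general_general (m : ℕ) (s n d : ℕ → ℂ) (μ ν : ℕ)
    (hnum0 : ∀ l < μ, ∑ k ∈ Finset.range (m + 1), n k * s k ^ l = 0)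
    (hden0 : ∀ l < ν, ∑ k ∈ Finset.range (m + 1), d k * s k ^ l = 0)
    (hden : ∑ k ∈ Finset.range (m + 1), d k * s k ^ ν ≠ 0)
    (r : ℂ → ℂ)
    (hr : ∀ z : ℂ, r z = (∑ k ∈ Finset.range (m + 1), n k / (z - s k)) /
      (∑ k ∈ Finset.range (m + 1), d k / (z - s k))) :
    Filter.Tendsto (fun z : ℂ => r z * z ^ ((μ : ℤ) - ν)) (Bornology.cobounded ℂ)
      (nhds ((∑ k ∈ Finset.range (m + 1), n k * s k ^ μ) /
        (∑ k ∈ Finset.range (m + 1), d k * s k ^ ν))) := by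
  have hquot := (tendsto_pow_succ_mul_sum_div_sub _ n s μ hnum0).div
    (tendsto_pow_succ_mul_sum_div_sub _ d s ν hden0) hden
  refine hquot.congr' ?_
  filter_upwards [eventually_ne_cobounded (0 : ℂ)] with z hz
  have hpow : z ^ (μ + 1) / z ^ (ν + 1) = z ^ ((μ : ℤ) - ν) := by
    rw [← zpow_natCast, ← zpow_natCast, ← zpow_sub₀ hz]
    congr 1
    push_cast
    ring
  rw [Pi.div_apply, hr z, mul_div_mul_comm, hpow, mul_comm]

/-- Paper's Corollary 6.1: relative-degree result for the general (non-interpolatory)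
barycentric form with numerator weights `n_k` and denominator weights `d_k`. -/
theorem barycentric_relative_degree_general (m : ℕ) (s n d : ℕ → ℂ) (μ ν : ℕ)
    (hμ : μ ≤ m) (hν : ν ≤ m)
    (hnum0 : ∀ l < μ, ∑ k ∈ Finset.range (m + 1), n k * s k ^ l = 0)
    (hnum : ∑ k ∈ Finset.range (m + 1), n k * s k ^ μ ≠ 0)
    (hden0 : ∀ l < ν, ∑ k ∈ Finset.range (m + 1), d k * s k ^ l = 0)
    (hden : ∑ k ∈ Finset.range (m + 1), d k * s k ^ ν ≠ 0)
    (r : ℂ → ℂ)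
    (hr : ∀ z : ℂ, r z = (∑ k ∈ Finset.range (m + 1), n k / (z - s k)) /
      (∑ k ∈ Finset.range (m + 1), d k / (z - s k))) :
    Filter.Tendsto (fun z : ℂ => r z * z ^ ((μ : ℤ) - ν)) (Bornology.cobounded ℂ)
      (nhds ((∑ k ∈ Finset.range (m + 1), n k * s k ^ μ) /
        (∑ k ∈ Finset.range (m + 1), d k * s k ^ ν))) :=
  barycentric_relative_degree_general_general m s n d μ ν hnum0 hden0 hden r hr
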